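/- Let W be the wheel graph with vertices a, b, c, d, e, x, where a, b, c, d, e form a 5-cycle and x is adjacent to each of a, b, c, d, e (no loops). Then the fundamental group Π₁(W, x), the group of ≡-classes of closed walks at x under concatenation, is cyclic of order 2, generated by the class of the closed walk (x a b x). -/

import Mathlib

/-- A graph: vertex type `V` with a symmetric adjacency relation (loops allowed). -/
structure LGraph (V : Type) where
  Adj : V → V → Prop
  symm : Symmetric Adj

variable {V W X : Type}

/-- `l` is the (nonempty) vertex sequence of a walk in `G`. -/
def IsWalk (G : LGraph V) (l : List V) : Prop :=
  l ≠ [] ∧ l.Chain' G.Adj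

/-- `l` is a walk in `G` from `x` to `y`. -/
def IsWalkFrom (G : LGraph V) (x y : V) (l : List V) : Prop :=
  l.Chain' G.Adj ∧ l.head? = some x ∧ l.getLast? = some y

/-- Concatenation of walks sharing an endpoint: follow `l`, then `m`. -/
def wconcat (l m : List V) : List V := l ++ m.tail

/-- A walk is prunable if some vertex `vᵢ` satisfies `vᵢ = vᵢ₊₂`. -/
def Prunable (l : List V) : Prop :=
  ∃ (p s : List V) (a b : V), l = p ++ a :: b :: a :: s

/-- `m` is obtained from `l` by a single prune (deleting `vᵢ, vᵢ₊₁` when `vᵢ = vᵢ₊₂`). -/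
def PruneOf (l m : List V) : Prop :=
  ∃ (p s : List V) (a b : V), l = p ++ a :: b :: a :: s ∧ m = p ++ a :: s

/-- A single prune step (in either direction) between walks of `G`. -/
def PruneStep (G : LGraph V) (l m : List V) : Prop :=
  IsWalk G l ∧ IsWalk G m ∧ (PruneOf l m ∨ PruneOf m l)

/-- Prune equivalence: the equivalence relation on walks of `G` generated by prunes. -/
def PruneEqv (G : LGraph V) : List V → List V → Prop :=
  Relation.EqvGen (PruneStep G)

/-- A spider move: two walks of `G` of the same length which agree at every index
except (at most) a single interior index. -/
def SpiderStep (G : LGraph V) (l m : List V) : Prop :=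
  IsWalk G l ∧ IsWalk G m ∧ l.length = m.length ∧
    ∃ i : ℕ, 0 < i ∧ i + 1 < l.length ∧ ∀ j : ℕ, j ≠ i → l[j]? = m[j]?

/-- Homotopy rel endpoints (`≡`): the equivalence relation on walks of `G`
generated by prunes and spider moves. -/
def HomEqv (G : LGraph V) : List V → List V → Prop :=
  Relation.EqvGen (fun l m => PruneStep G l m ∨ SpiderStep G l m)

/-- A graph morphism. -/
def IsHom (G : LGraph V) (H : LGraph W) (f : V → W) : Prop :=
  ∀ {u v : V}, G.Adj u v → H.Adj (f u) (f v)

/-- One step of a ×-homotopy between graph morphisms. -/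
def HtpyStep (G : LGraph V) (H : LGraph W) (f g : V → W) : Prop :=
  IsHom G H f ∧ IsHom G H g ∧ ∀ u v, G.Adj u v → H.Adj (f u) (g v)

/-- ×-homotopy of graph morphisms. -/
def Homotopic (G : LGraph V) (H : LGraph W) : (V → W) → (V → W) → Prop :=
  Relation.ReflTransGen (HtpyStep G H)

/-- The wheel graph: vertices `0,…,4` forming a 5-cycle, and a hub `5` adjacent to all
of them; no loops. -/
def Wheel : LGraph (Fin 6) where
  Adj i j :=
    (i = 5 ∧ j ≠ 5) ∨ (j = 5 ∧ i ≠ 5) ∨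
      (i ≠ 5 ∧ j ≠ 5 ∧ (j.val = (i.val + 1) % 5 ∨ i.val = (j.val + 1) % 5))
  symm := by
    intro i j h
    tauto

/-!
Every move preserves the parity of the length of a walk, so the generator `(5 0 1 5)`, of odd
length, is not `≡` to the trivial walk. Conversely, a closed walk `5 v w u …` at the hub with
`u ≠ 5` shortens by the spider move `w ↦ 5` followed by the prune of `5 v 5`; when `u = 5` it
splits off a triangle `5 v w 5`. Two triangles on consecutive rim edges differ by one spider move,
so going around the rim turns every triangle into the generator. Since `≡` is compatible with
concatenation, every closed walk is then `≡` to a power of the generator, and its square is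
trivial by an explicit sequence of moves.
-/

instance {G : LGraph V} [DecidableRel G.Adj] (l : List V) : Decidable (IsWalk G l) :=
  inferInstanceAs (Decidable (l ≠ [] ∧ l.IsChain G.Adj))

namespace HomEqv

variable {G : LGraph V} {l m n : List V}

def Step (G : LGraph V) (l m : List V) : Prop :=
  PruneStep G l m ∨ SpiderStep G l m

theorem of_step (h : Step G l m) : HomEqv G l m := Relation.EqvGen.rel _ _ h

theorem refl (l : List V) : HomEqv G l l := Relation.EqvGen.refl l

theorem symm (h : HomEqv G l m) : HomEqv G m l := Relation.EqvGen.symm _ _ h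

theorem trans (h₁ : HomEqv G l m) (h₂ : HomEqv G m n) : HomEqv G l n :=
  Relation.EqvGen.trans _ _ _ h₁ h₂

instance : Trans (HomEqv G) (HomEqv G) (HomEqv G) := ⟨trans⟩

theorem of_spider (i : ℕ) (h : IsWalk G l ∧ IsWalk G m ∧ l.length = m.length ∧ 0 < i ∧
    i + 1 < l.length ∧ ∀ j < l.length, j ≠ i → l[j]? = m[j]?) : HomEqv G l m := by
  obtain ⟨hl, hm, hlen, hi, hil, heq⟩ := h
  refine of_step (Or.inr ⟨hl, hm, hlen, i, hi, hil, fun j hj => ?_⟩)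
  by_cases hjl : j < l.length
  · exact heq j hjl hj
  · rw [List.getElem?_eq_none (by omega), List.getElem?_eq_none (by omega)]

theorem of_prune (p s : List V) (a b : V)
    (h : IsWalk G (p ++ a :: b :: a :: s) ∧ IsWalk G (p ++ a :: s)) :
    HomEqv G (p ++ a :: b :: a :: s) (p ++ a :: s) :=
  of_step (Or.inl ⟨h.1, h.2, Or.inl ⟨p, s, a, b, rfl, rfl⟩⟩)

theorem eq_of_step_eq {β : Sort*} (f : List V → β) (hf : ∀ l m, Step G l m → f l = f m)
    (h : HomEqv G l m) : f l = f m :=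
  congrArg (Quot.lift f hf) (Quot.eqvGen_sound h)

theorem step_length_mod_two (h : Step G l m) : l.length % 2 = m.length % 2 := by
  rcases h with ⟨-, -, ⟨p, s, a, b, rfl, rfl⟩ | ⟨p, s, a, b, rfl, rfl⟩⟩ | ⟨-, -, hlen, -⟩
  · simp only [List.length_append, List.length_cons]; omega
  · simp only [List.length_append, List.length_cons]; omega
  · rw [hlen]

theorem step_head? (h : Step G l m) : l.head? = m.head? := by
  rcases h with ⟨-, -, ⟨p, s, a, b, rfl, rfl⟩ | ⟨p, s, a, b, rfl, rfl⟩⟩ | ⟨-, -, -, i, hi, -, heq⟩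
  · cases p <;> rfl
  · cases p <;> rfl
  · simpa only [List.head?_eq_getElem?] using heq 0 (by omega)

theorem step_getLast? (h : Step G l m) : l.getLast? = m.getLast? := by
  rcases h with ⟨-, -, ⟨p, s, a, b, rfl, rfl⟩ | ⟨p, s, a, b, rfl, rfl⟩⟩ |
    ⟨-, -, hlen, i, -, hil, heq⟩
  · cases s <;> simp
  · cases s <;> simp
  · rw [List.getLast?_eq_getElem?, List.getLast?_eq_getElem?, ← hlen]
    exact heq _ (by omega)

theorem length_mod_two (h : HomEqv G l m) : l.length % 2 = m.length % 2 :=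
  eq_of_step_eq (fun l => l.length % 2) (fun _ _ => step_length_mod_two) h

theorem map_of_step {P : List V → Prop} (f : List V → List V)
    (hP : ∀ l m, Step G l m → (P l ↔ P m)) (hf : ∀ l m, Step G l m → P l → Step G (f l) (f m))
    (h : HomEqv G l m) (hl : P l) : HomEqv G (f l) (f m) := by
  have hPeq : ∀ {l m}, HomEqv G l m → P l = P m :=
    eq_of_step_eq P fun l m hs => propext (hP l m hs)
  induction h with
  | rel l m hs => exact of_step (hf l m hs hl)
  | refl l => exact refl _
  | symm l m h ih => exact (ih ((hPeq h).mpr hl)).symm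
  | trans l m n h₁ _ ih₁ ih₂ => exact (ih₁ hl).trans (ih₂ ((hPeq h₁).mp hl))

theorem _root_.IsWalk.append_left {p l : List V} {x : V} (hp : (p ++ [x]).IsChain G.Adj)
    (hl : l.head? = some x) (h : IsWalk G l) : IsWalk G (p ++ l) := by
  obtain ⟨l, rfl⟩ := List.head?_eq_some_iff.mp hl
  have hch : (p ++ x :: l).IsChain G.Adj := by
    simpa using hp.append_overlap h.2 (List.cons_ne_nil x [])
  exact ⟨by simp, hch⟩

theorem _root_.IsWalk.append_right {l s : List V} {x : V} (hs : (x :: s).IsChain G.Adj)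
    (hl : l.getLast? = some x) (h : IsWalk G l) : IsWalk G (l ++ s) := by
  obtain ⟨l, rfl⟩ := List.getLast?_eq_some_iff.mp hl
  exact ⟨by simp, h.2.append_overlap hs (List.cons_ne_nil x [])⟩

theorem step_append_left {p : List V} {x : V} (hp : (p ++ [x]).IsChain G.Adj)
    (h : Step G l m) (hl : l.head? = some x) : Step G (p ++ l) (p ++ m) := by
  have hm : m.head? = some x := step_head? h ▸ hl
  rcases h with ⟨hlw, hmw, h⟩ | ⟨hlw, hmw, hlen, i, hi, hil, heq⟩
  · refine Or.inl ⟨hlw.append_left hp hl, hmw.append_left hp hm, ?_⟩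
    rcases h with ⟨q, s, a, b, rfl, rfl⟩ | ⟨q, s, a, b, rfl, rfl⟩
    · exact Or.inl ⟨p ++ q, s, a, b, by simp, by simp⟩
    · exact Or.inr ⟨p ++ q, s, a, b, by simp, by simp⟩
  · refine Or.inr ⟨hlw.append_left hp hl, hmw.append_left hp hm, by simp [hlen], p.length + i,
      by omega, by simp only [List.length_append]; omega, fun j hj => ?_⟩
    simp only [List.getElem?_append]
    split_ifs with hjp
    · rfl
    · exact heq _ (by omega)

theorem step_append_right {s : List V} {x : V} (hs : (x :: s).IsChain G.Adj)
    (h : Step G l m) (hl : l.getLast? = some x) : Step G (l ++ s) (m ++ s) := by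
  have hm : m.getLast? = some x := step_getLast? h ▸ hl
  rcases h with ⟨hlw, hmw, h⟩ | ⟨hlw, hmw, hlen, i, hi, hil, heq⟩
  · refine Or.inl ⟨hlw.append_right hs hl, hmw.append_right hs hm, ?_⟩
    rcases h with ⟨q, t, a, b, rfl, rfl⟩ | ⟨q, t, a, b, rfl, rfl⟩
    · exact Or.inl ⟨q, t ++ s, a, b, by simp, by simp⟩
    · exact Or.inr ⟨q, t ++ s, a, b, by simp, by simp⟩
  · refine Or.inr ⟨hlw.append_right hs hl, hmw.append_right hs hm, by simp [hlen], i, hi,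
      by simp only [List.length_append]; omega, fun j hj => ?_⟩
    simp only [List.getElem?_append, hlen]
    split_ifs with hjl
    · exact heq j hj
    · rfl

theorem append_left {p : List V} {x : V} (hp : (p ++ [x]).IsChain G.Adj) (h : HomEqv G l m)
    (hl : l.head? = some x) : HomEqv G (p ++ l) (p ++ m) :=
  map_of_step (P := fun l => l.head? = some x) (p ++ ·)
    (fun _ _ hs => by rw [step_head? hs]) (fun _ _ hs hl => step_append_left hp hs hl) h hl

theorem append_right {s : List V} {x : V} (hs : (x :: s).IsChain G.Adj) (h : HomEqv G l m)
    (hl : l.getLast? = some x) : HomEqv G (l ++ s) (m ++ s) :=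
  map_of_step (P := fun l => l.getLast? = some x) (· ++ s)
    (fun _ _ hs => by rw [step_getLast? hs]) (fun _ _ hs' hl => step_append_right hs hs' hl) h hl

theorem backtrack {x v : V} (h : G.Adj x v) : HomEqv G [x, v, x] [x] := by
  have hback : [x, v, x].IsChain G.Adj := (List.isChain_pair.mpr (G.symm h)).cons_cons h
  exact of_prune [] [] x v
    ⟨⟨List.cons_ne_nil _ _, hback⟩, List.cons_ne_nil _ _, List.isChain_singleton x⟩

theorem hub_shortcut {x v w u : V} {s : List V} (hvx : G.Adj v x) (hxu : G.Adj x u)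
    (h : IsWalk G (x :: v :: w :: u :: s)) : HomEqv G (x :: v :: w :: u :: s) (x :: u :: s) := by
  have hch : (x :: v :: w :: u :: s).IsChain G.Adj := h.2
  have hxv : G.Adj x v := hch.rel_head
  have hus : (u :: s).IsChain G.Adj := hch.drop 3
  have hshort : IsWalk G (x :: u :: s) := ⟨List.cons_ne_nil _ _, hus.cons_cons hxu⟩
  have hdetour : IsWalk G (x :: v :: x :: u :: s) :=
    ⟨List.cons_ne_nil _ _, ((hus.cons_cons hxu).cons_cons hvx).cons_cons hxv⟩
  refine (of_spider 2 ⟨h, hdetour, rfl, by omega, by simp, fun j _ hj => ?_⟩).trans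
    (of_prune [] (u :: s) x v ⟨hdetour, hshort⟩)
  match j with
  | 0 | 1 => rfl
  | 2 => exact absurd rfl hj
  | _ + 3 => rfl

end HomEqv

instance : DecidableRel Wheel.Adj := fun _ _ => by unfold Wheel; infer_instance

namespace Wheel

open HomEqv

theorem hub_adj_iff {u : Fin 6} : Wheel.Adj 5 u ↔ u ≠ 5 := by
  revert u; decide

theorem adj_hub_iff {u : Fin 6} : Wheel.Adj u 5 ↔ u ≠ 5 := by
  revert u; decide

theorem rim_adj_cases : ∀ a b : Fin 6, Wheel.Adj a b → a ≠ 5 → b ≠ 5 →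
    a = 0 ∧ b = 1 ∨ a = 2 ∧ b = 1 ∨ a = 2 ∧ b = 3 ∨ a = 4 ∧ b = 3 ∨ a = 4 ∧ b = 0 ∨
    a = 1 ∧ b = 0 ∨ a = 1 ∧ b = 2 ∨ a = 3 ∧ b = 2 ∨ a = 3 ∧ b = 4 ∨ a = 0 ∧ b = 4 := by
  decide

theorem triangle_eqv {a b : Fin 6} (hab : Wheel.Adj a b) (ha : a ≠ 5) (hb : b ≠ 5) :
    HomEqv Wheel [5, a, b, 5] [5, 0, 1, 5] := by
  have e01 : HomEqv Wheel [5, 0, 1, 5] [5, 0, 1, 5] := refl _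
  have e21 : HomEqv Wheel [5, 2, 1, 5] [5, 0, 1, 5] := (of_spider 1 (by decide)).trans e01
  have e23 : HomEqv Wheel [5, 2, 3, 5] [5, 0, 1, 5] := (of_spider 2 (by decide)).trans e21
  have e43 : HomEqv Wheel [5, 4, 3, 5] [5, 0, 1, 5] := (of_spider 1 (by decide)).trans e23
  have e40 : HomEqv Wheel [5, 4, 0, 5] [5, 0, 1, 5] := (of_spider 2 (by decide)).trans e43
  have e10 : HomEqv Wheel [5, 1, 0, 5] [5, 0, 1, 5] := (of_spider 1 (by decide)).trans e40
  have e12 : HomEqv Wheel [5, 1, 2, 5] [5, 0, 1, 5] := (of_spider 2 (by decide)).trans e10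
  have e32 : HomEqv Wheel [5, 3, 2, 5] [5, 0, 1, 5] := (of_spider 1 (by decide)).trans e12
  have e34 : HomEqv Wheel [5, 3, 4, 5] [5, 0, 1, 5] := (of_spider 2 (by decide)).trans e32
  have e04 : HomEqv Wheel [5, 0, 4, 5] [5, 0, 1, 5] := (of_spider 1 (by decide)).trans e34
  rcases rim_adj_cases a b hab ha hb with ⟨rfl, rfl⟩ | ⟨rfl, rfl⟩ | ⟨rfl, rfl⟩ | ⟨rfl, rfl⟩ |
    ⟨rfl, rfl⟩ | ⟨rfl, rfl⟩ | ⟨rfl, rfl⟩ | ⟨rfl, rfl⟩ | ⟨rfl, rfl⟩ | ⟨rfl, rfl⟩ <;> assumption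

/-- The three spider moves push the second triangle around the rim, after which the loop is the
boundary of a fan of triangles at the hub and collapses. -/
theorem generator_sq : HomEqv Wheel (wconcat [5, 0, 1, 5] [5, 0, 1, 5]) [5] :=
  calc HomEqv Wheel [5, 0, 1, 5, 0, 1, 5] [5, 0, 4, 5, 0, 1, 5] := of_spider 2 (by decide)
    HomEqv Wheel _ [5, 0, 4, 5, 2, 1, 5] := of_spider 4 (by decide)
    HomEqv Wheel _ [5, 0, 4, 3, 2, 1, 5] := of_spider 3 (by decide)
    HomEqv Wheel _ [5, 3, 2, 1, 5] := hub_shortcut (by decide) (by decide) (by decide)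
    HomEqv Wheel _ [5, 1, 5] := hub_shortcut (by decide) (by decide) (by decide)
    HomEqv Wheel _ [5] := backtrack (by decide)

theorem closedWalk_eqv : ∀ α : List (Fin 6), IsWalkFrom Wheel 5 5 α →
    HomEqv Wheel α [5] ∨ HomEqv Wheel α [5, 0, 1, 5]
  | [], ⟨_, hhead, _⟩ => by simp at hhead
  | [x], ⟨_, hhead, _⟩ => by
    obtain rfl : x = 5 := by simpa using hhead
    exact Or.inl (refl _)
  | [x, v], ⟨hch, hhead, hlast⟩ => by
    obtain ⟨rfl, rfl⟩ : x = 5 ∧ v = 5 := by simp_all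
    exact absurd (List.isChain_pair.mp hch) (by decide)
  | [x, v, w], ⟨hch, hhead, hlast⟩ => by
    obtain ⟨rfl, rfl⟩ : x = 5 ∧ w = 5 := by simp_all
    exact Or.inl (backtrack (List.isChain_cons_cons.mp hch).1)
  | x :: v :: w :: u :: rest, ⟨hch, hhead, hlast⟩ => by
    obtain rfl : x = 5 := by simpa using hhead
    have hwalk : IsWalk Wheel (5 :: v :: w :: u :: rest) := ⟨List.cons_ne_nil _ _, hch⟩
    have hus : (u :: rest).IsChain Wheel.Adj := hch.drop 3
    have hlast' : (u :: rest).getLast? = some 5 := by simpa using hlast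
    have hv : v ≠ 5 := hub_adj_iff.mp (List.isChain_cons_cons.mp hch).1
    by_cases hu : u = 5
    · subst hu
      have hw : w ≠ 5 := adj_hub_iff.mp (hch.drop 2).rel_head
      have htri : HomEqv Wheel [5, v, w, 5] [5, 0, 1, 5] :=
        triangle_eqv (hch.drop 1).rel_head hv hw
      have hpre : ([5, v, w] ++ [5]).IsChain Wheel.Adj := hch.take 4
      rcases closedWalk_eqv (5 :: rest) ⟨hus, rfl, hlast'⟩ with h | h
      · exact Or.inr ((append_left hpre h rfl).trans htri)
      · refine Or.inl ((append_left hpre h rfl).trans ?_)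
        exact (append_right (x := 5) (by decide) htri rfl).trans generator_sq
    · have hshort := hub_shortcut (adj_hub_iff.mpr hv) (hub_adj_iff.mpr hu) hwalk
      have hrec := closedWalk_eqv (5 :: u :: rest)
        ⟨hus.cons_cons (hub_adj_iff.mpr hu), rfl, by simpa using hlast'⟩
      exact hrec.imp hshort.trans hshort.trans
termination_by α => α.length

end Wheel

/-- the fundamental group of the wheel at the hub `x = 5` is cyclic of
order 2, generated by the class of the closed walk `(x a b x) = (5 0 1 5)`: this class
is nontrivial, squares to the identity, and every closed walk at the hub is `≡` to the
trivial walk or to `(5 0 1 5)`. -/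
theorem stmt19 :
    ¬ HomEqv Wheel [5, 0, 1, 5] [(5 : Fin 6)] ∧
    HomEqv Wheel (wconcat [5, 0, 1, 5] [5, 0, 1, 5]) [(5 : Fin 6)] ∧
    (∀ α : List (Fin 6), IsWalkFrom Wheel 5 5 α →
      (HomEqv Wheel α [(5 : Fin 6)] ∨ HomEqv Wheel α [5, 0, 1, 5])) := by
  refine ⟨fun h => ?_, Wheel.generator_sq, Wheel.closedWalk_eqv⟩
  exact absurd (HomEqv.length_mod_two h) (by decide)
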